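/- Let X be an n-dimensional pure abstract simplicial complex with n odd, such that every link of a k-simplex has Euler characteristic 1 + (−1)^k. Then the number of even-dimensional simplices of X equals the number of odd-dimensional simplices of X (counting dimensions 0 through n). -/

import Mathlib

/-!
Weight each simplex `ρ` by `(-1)^|ρ|`. The link condition says exactly that, for every nonempty
simplex `σ`, the weights of the simplices containing `σ` sum to `1`. Summing `(-1)^(|σ| + |ρ|)`
over all pairs `∅ ≠ σ ⊆ ρ` in `X` then gives `-χ(X)` when grouped by `σ`, and `χ(X)` when grouped
by `ρ`, because the nonempty faces of a nonempty simplex have total weight `-1`. Hence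
`χ(X) = 0`, which is the claimed equality of the even- and odd-dimensional counts.
-/

open Finset

/-- An abstract simplicial complex: a finite collection of finite sets closed under subsets. -/
def IsComplex {V : Type*} [DecidableEq V] (X : Finset (Finset V)) : Prop :=
  ∀ σ ∈ X, ∀ τ, τ ⊆ σ → τ ∈ X

/-- The link of a simplex `σ`: all `τ ∈ X` with `σ ∩ τ = ∅` and `σ ∪ τ ∈ X`. -/
def lk {V : Type*} [DecidableEq V] (X : Finset (Finset V)) (σ : Finset V) :
    Finset (Finset V) :=
  X.filter (fun τ => σ ∩ τ = ∅ ∧ σ ∪ τ ∈ X)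

/-- Euler characteristic: alternating sum over nonempty simplices of (-1)^(dimension). -/
def chi {V : Type*} [DecidableEq V] (Y : Finset (Finset V)) : ℤ :=
  ∑ τ ∈ Y.filter (· ≠ ∅), (-1 : ℤ) ^ (τ.card + 1)

/-- `X` is pure of dimension `n`: every maximal simplex has cardinality `n + 1`. -/
def IsPure {V : Type*} [DecidableEq V] (X : Finset (Finset V)) (n : ℕ) : Prop :=
  ∀ σ ∈ X, (∀ τ ∈ X, σ ⊆ τ → τ = σ) → σ.card = n + 1

section EulerComplex

variable {V : Type*} [DecidableEq V]

theorem chi_eq_neg_sum (Y : Finset (Finset V)) :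
    chi Y = -∑ τ ∈ Y with τ ≠ ∅, (-1 : ℤ) ^ τ.card := by
  simp only [chi, pow_succ, mul_neg_one, sum_neg_distrib]

theorem chi_eq_card_even_sub_card_odd (Y : Finset (Finset V)) :
    chi Y = #{σ ∈ Y | σ ≠ ∅ ∧ Even (σ.card - 1)} - (#{σ ∈ Y | σ ≠ ∅ ∧ Odd (σ.card - 1)} : ℤ) := by
  rw [chi, sum_filter, natCast_card_filter, natCast_card_filter, ← sum_sub_distrib]
  refine sum_congr rfl fun τ _ => ?_
  rcases eq_or_ne τ ∅ with rfl | hτ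
  · simp
  obtain ⟨m, hm⟩ := Nat.exists_eq_add_one.mpr (card_pos.mpr (nonempty_iff_ne_empty.mpr hτ))
  rcases Nat.even_or_odd m with hm' | hm'
  · simp [hτ, hm, hm', pow_succ, hm'.neg_one_pow, Nat.not_odd_iff_even.mpr hm']
  · simp [hτ, hm, hm', pow_succ, hm'.neg_one_pow, Nat.not_even_iff_odd.mpr hm']

theorem sum_neg_one_pow_card_eq_one_sub_chi {Y : Finset (Finset V)} (hY : ∅ ∈ Y) :
    ∑ τ ∈ Y, (-1 : ℤ) ^ τ.card = 1 - chi Y := by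
  rw [chi_eq_neg_sum, filter_ne', ← add_sum_erase Y _ hY, card_empty, pow_zero, sub_neg_eq_add]

theorem sum_nonempty_subset_neg_one_pow_card {ρ : Finset V} (hρ : ρ.Nonempty) :
    ∑ σ ∈ ρ.powerset with σ ≠ ∅, (-1 : ℤ) ^ σ.card = -1 := by
  have h := sum_neg_one_pow_card_eq_one_sub_chi (empty_mem_powerset ρ)
  rw [sum_powerset_neg_one_pow_card_of_nonempty hρ, eq_comm, sub_eq_zero] at h
  rw [← neg_eq_iff_eq_neg, ← chi_eq_neg_sum, ← h]

variable {X : Finset (Finset V)}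

theorem empty_mem_lk (hX : IsComplex X) {σ : Finset V} (hσ : σ ∈ X) : ∅ ∈ lk X σ := by
  simp [lk, hσ, hX σ hσ ∅ (empty_subset σ)]

theorem sum_superset_eq_sum_lk {M : Type*} [AddCommMonoid M] (hX : IsComplex X) (σ : Finset V)
    (f : Finset V → M) :
    ∑ ρ ∈ X with σ ⊆ ρ, f ρ = ∑ τ ∈ lk X σ, f (σ ∪ τ) := by
  symm
  refine sum_nbij' (σ ∪ ·) (· \ σ) ?_ ?_ ?_ ?_ fun _ _ => rfl
  · intro τ hτ
    simp only [lk, mem_filter] at hτ ⊢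
    exact ⟨hτ.2.2, subset_union_left⟩
  · intro ρ hρ
    simp only [lk, mem_filter] at hρ ⊢
    refine ⟨hX ρ hρ.1 _ sdiff_subset, inter_sdiff_self σ ρ, ?_⟩
    rw [union_sdiff_of_subset hρ.2]
    exact hρ.1
  · intro τ hτ
    simp only [lk, mem_filter] at hτ
    exact union_sdiff_cancel_left (disjoint_iff_inter_eq_empty.mpr hτ.2.1)
  · intro ρ hρ
    rw [mem_filter] at hρ
    exact union_sdiff_of_subset hρ.2

theorem sum_superset_neg_one_pow_card (hX : IsComplex X) {σ : Finset V} (hσ : σ ∈ X) :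
    ∑ ρ ∈ X with σ ⊆ ρ, (-1 : ℤ) ^ ρ.card = (-1) ^ σ.card * (1 - chi (lk X σ)) := by
  rw [sum_superset_eq_sum_lk hX, ← sum_neg_one_pow_card_eq_one_sub_chi (empty_mem_lk hX hσ),
    mul_sum]
  refine sum_congr rfl fun τ hτ => ?_
  have hdisj : Disjoint σ τ := disjoint_iff_inter_eq_empty.mpr (mem_filter.mp hτ).2.1
  rw [card_union_of_disjoint hdisj, pow_add]

theorem chi_eq_zero_of_sum_superset_eq_one (hX : IsComplex X)
    (h : ∀ σ ∈ X, σ ≠ ∅ → ∑ ρ ∈ X with σ ⊆ ρ, (-1 : ℤ) ^ ρ.card = 1) : chi X = 0 := by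
  have hpairs : ∑ σ ∈ X with σ ≠ ∅, ∑ ρ ∈ X with σ ⊆ ρ, (-1 : ℤ) ^ σ.card * (-1) ^ ρ.card =
      ∑ ρ ∈ X with ρ ≠ ∅, ∑ σ ∈ ρ.powerset with σ ≠ ∅, (-1 : ℤ) ^ σ.card * (-1) ^ ρ.card := by
    refine sum_comm' fun σ ρ => ?_
    simp only [mem_filter, mem_powerset]
    constructor
    · rintro ⟨⟨-, hσ⟩, hρ, hσρ⟩
      exact ⟨⟨hσρ, hσ⟩, hρ, fun hρ' => hσ (subset_empty.mp (hρ' ▸ hσρ))⟩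
    · rintro ⟨⟨hσρ, hσ⟩, hρ, -⟩
      exact ⟨⟨hX ρ hρ σ hσρ, hσ⟩, hρ, hσρ⟩
  have hgroup_σ : ∑ σ ∈ X with σ ≠ ∅, ∑ ρ ∈ X with σ ⊆ ρ, (-1 : ℤ) ^ σ.card * (-1) ^ ρ.card =
      -chi X := by
    rw [chi_eq_neg_sum, neg_neg]
    refine sum_congr rfl fun σ hσ => ?_
    rw [← mul_sum, h σ (mem_filter.mp hσ).1 (mem_filter.mp hσ).2, mul_one]
  have hgroup_ρ : ∑ ρ ∈ X with ρ ≠ ∅, ∑ σ ∈ ρ.powerset with σ ≠ ∅,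
      (-1 : ℤ) ^ σ.card * (-1) ^ ρ.card = chi X := by
    rw [chi_eq_neg_sum, ← sum_neg_distrib]
    refine sum_congr rfl fun ρ hρ => ?_
    rw [← sum_mul, sum_nonempty_subset_neg_one_pow_card
      (nonempty_iff_ne_empty.mpr (mem_filter.mp hρ).2), neg_one_mul]
  linarith

end EulerComplex

theorem stmt9_general {V : Type*} [DecidableEq V] (X : Finset (Finset V))
    (hX : IsComplex X)
    (heuler : ∀ k : ℕ, ∀ σ ∈ X, σ.card = k + 1 →
      chi (lk X σ) = 1 + (-1 : ℤ) ^ k) :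
    (X.filter (fun σ => σ ≠ ∅ ∧ Even (σ.card - 1))).card =
      (X.filter (fun σ => σ ≠ ∅ ∧ Odd (σ.card - 1))).card := by
  have hchi : chi X = 0 := by
    refine chi_eq_zero_of_sum_superset_eq_one hX fun σ hσ hne => ?_
    obtain ⟨k, hk⟩ := Nat.exists_eq_add_one.mpr (card_pos.mpr (nonempty_iff_ne_empty.mpr hne))
    rw [sum_superset_neg_one_pow_card hX hσ, heuler k σ hσ hk, hk, pow_succ]
    rcases neg_one_pow_eq_or ℤ k with h | h <;> rw [h] <;> norm_num
  have hcount := chi_eq_card_even_sub_card_odd X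
  omega

/-- In an odd-dimensional Euler complex, the number of even-dimensional simplices
equals the number of odd-dimensional simplices. -/
theorem stmt9 {V : Type*} [DecidableEq V] (X : Finset (Finset V)) (n : ℕ)
    (hX : IsComplex X) (hpure : IsPure X n) (hodd : Odd n)
    (heuler : ∀ k : ℕ, ∀ σ ∈ X, σ.card = k + 1 →
      chi (lk X σ) = 1 + (-1 : ℤ) ^ k) :
    (X.filter (fun σ => σ ≠ ∅ ∧ Even (σ.card - 1))).card =
      (X.filter (fun σ => σ ≠ ∅ ∧ Odd (σ.card - 1))).card :=
  stmt9_general X hX heuler
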